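/- arXiv:2109.10576 — 3 statements merged into one kernel-verified Lean document; each statement's English description precedes it below -/
import Mathlib

section
/- (Dwell-time lower bound) Let e : [t_i, t_{i+1}] → ℝ^{n_y} be absolutely continuous with e(t_i) = 0, |ė(s)| ≤ M almost everywhere (M > 0), and suppose |e(t_{i+1})|² ≥ ε/γ with ε, γ > 0. Then t_{i+1} - t_i ≥ (1/(2M)) √(ε/γ). -/
open MeasureTheory

/-- dwell-time lower bound between two consecutive transmissions. -/
theorem stmt_8 {ny : ℕ} (tᵢ tᵢ₁ M ε γ : ℝ) (hle : tᵢ ≤ tᵢ₁)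
    (hM : 0 < M) (hε : 0 < ε) (hγ : 0 < γ)
    (e e' : ℝ → EuclideanSpace ℝ (Fin ny))
    (he0 : e tᵢ = 0)
    (hint : IntegrableOn e' (Set.Icc tᵢ tᵢ₁))
    (hFTC : ∀ s ∈ Set.Icc tᵢ tᵢ₁, e s = ∫ r in tᵢ..s, e' r)
    (hbound : ∀ᵐ s ∂(volume.restrict (Set.Icc tᵢ tᵢ₁)), ‖e' s‖ ≤ M)
    (htrig : ‖e tᵢ₁‖ ^ 2 ≥ ε / γ) :
    tᵢ₁ - tᵢ ≥ (1 / (2 * M)) * Real.sqrt (ε / γ) := by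
  have hbound' : ∀ᵐ x, x ∈ Set.uIoc tᵢ tᵢ₁ → ‖e' x‖ ≤ M := by
    have := (ae_restrict_iff' measurableSet_Icc).mp hbound
    filter_upwards [this] with x hx hx'
    exact hx (Set.Ioc_subset_Icc_self ((Set.uIoc_of_le hle) ▸ hx'))
  have hnorm : ‖e tᵢ₁‖ ≤ M * (tᵢ₁ - tᵢ) := by
    rw [hFTC tᵢ₁ (Set.right_mem_Icc.mpr hle)]
    calc ‖∫ r in tᵢ..tᵢ₁, e' r‖ ≤ M * |tᵢ₁ - tᵢ| :=
          intervalIntegral.norm_integral_le_of_norm_le_const_ae hbound'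
      _ = M * (tᵢ₁ - tᵢ) := by rw [abs_of_nonneg (by linarith)]
  have hsqrt : Real.sqrt (ε / γ) ≤ ‖e tᵢ₁‖ := by
    have := Real.sqrt_le_sqrt htrig
    rwa [Real.sqrt_sq (norm_nonneg _)] at this
  have hεγ : 0 ≤ Real.sqrt (ε / γ) := Real.sqrt_nonneg _
  rw [ge_iff_le, div_mul_eq_mul_div, one_mul, div_le_iff₀ (by positivity)]
  nlinarith [hsqrt.trans hnorm]
end

section
/- If a function e : ℝ≥0 → ℝ^{n_y}, starting from e(t_i) = 0 at each event time t_i and satisfying |ė| ≤ M between events, generates events only when |e|² ≥ ε/γ, then for any s ≤ t and any count of events i ≤ j occurring in [s,t], one has j - i ≤ (t - s)/τ + 1 with τ = (1/(2M))√(ε/γ). -/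
/-- dwell-time implies an average bound on the number of events. -/
theorem stmt_9 (M ε γ τ s t : ℝ) (hM : 0 < M) (hε : 0 < ε) (hγ : 0 < γ)
    (hτ : τ = (1 / (2 * M)) * Real.sqrt (ε / γ))
    (tk : ℕ → ℝ) (i j : ℕ) (hij : i ≤ j) (hst : s ≤ t)
    (hspace : ∀ k, i ≤ k → k < j → tk (k + 1) - tk k ≥ τ)
    (hfirst : i < j → s ≤ tk (i + 1))
    (hlast : i < j → tk j ≤ t) :
    ((j : ℝ) - (i : ℝ)) ≤ (t - s) / τ + 1 := by
  have hτpos : 0 < τ := by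
    rw [hτ]
    have : 0 < Real.sqrt (ε / γ) := Real.sqrt_pos.mpr (div_pos hε hγ)
    positivity
  rcases eq_or_lt_of_le hij with heq | hlt
  · subst heq
    have : (0:ℝ) ≤ (t - s) / τ := div_nonneg (by linarith) hτpos.le
    simp
    linarith
  · have key : ∀ n, i + 1 ≤ n → n ≤ j → ((n : ℝ) - (i + 1 : ℕ)) * τ ≤ tk n - tk (i + 1) := by
      intro n hn
      induction n, hn using Nat.le_induction with
      | base => intro _; simp
      | succ n hn ih =>
        intro hnj
        have h1 := ih (le_of_lt hnj)
        have h2 := hspace n (by omega) (by omega)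
        push_cast
        push_cast at h1
        linarith
    have hk : ((j:ℝ) - (i+1:ℕ)) * τ ≤ t - s := by
      have h1 := key j hlt le_rfl
      have := hfirst hlt; have := hlast hlt
      linarith
    have : (j:ℝ) - (i+1:ℕ) ≤ (t - s) / τ := (le_div_iff₀ hτpos).mpr hk
    push_cast at this ⊢
    linarith
end

section
/- (Practical stability bound, Theorem 1) Under the ISS Lyapunov inequality ⟨∇V(ξ), (A-LC)ξ - Le⟩ ≤ -αV(ξ) + γ|e|², parameters chosen per items (i)–(iv) (σc₂ < γ via σ ≤ σ*, c₂ ≤ c₂*; c₁ ≥ c₁* > ᾱ(1-σ*c₂*/γ)⁻¹; c₃ ∈ [0,1]; ε ≤ ε* = νᾱγ(γ + c₂*d)⁻¹ with d = σ*(1 - σ*c₂*/γ - ᾱ/c₁*)⁻¹), every solution of the hybrid estimation system satisfies V(ξ(t,j)) + dη(t,j) ≤ e^{-ᾱt}(V(ξ(0,0)) + dη(0,0)) + ν for all hybrid times (t,j). -/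
open RealInnerProductSpace Set

/-! With `W = V(ξ) + d η`, the ISS inequality, the triggering rule `γ |e|² ≤ σ c₁ η + ε` and the
choice of `d`, `c₁`, `ε` give `Ẇ ≤ -ᾱ (W - ν)` along flows, while at jumps `ξ` is unchanged and
`η` is scaled by `c₃ ≤ 1`, so `W` does not increase. Hence `e^{ᾱ t} (W - ν)` is nonincreasing
along the whole hybrid arc. -/

theorem antitoneOn_exp_mul_mul_sub_of_hasDerivAt {a b k ν : ℝ} {f f' : ℝ → ℝ}
    (hf : ∀ s ∈ Icc a b, HasDerivAt f (f' s) s)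
    (hdecay : ∀ s ∈ Icc a b, f' s ≤ -k * (f s - ν)) :
    AntitoneOn (fun s => Real.exp (k * s) * (f s - ν)) (Icc a b) := by
  have hg : ∀ s ∈ Icc a b, HasDerivAt (fun u => Real.exp (k * u) * (f u - ν))
      (Real.exp (k * s) * (f' s + k * (f s - ν))) s := fun s hs => by
    have hexp : HasDerivAt (fun u => Real.exp (k * u)) (Real.exp (k * s) * k) s := by
      simpa using ((hasDerivAt_id s).const_mul k).exp
    exact (hexp.mul ((hf s hs).sub_const ν)).congr_deriv (by ring)
  refine antitoneOn_of_deriv_nonpos (convex_Icc a b)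
    (fun s hs => (hg s hs).continuousAt.continuousWithinAt) ?_ ?_ <;> rw [interior_Icc]
  · exact fun s hs => (hg s (Ioo_subset_Icc_self hs)).differentiableAt.differentiableWithinAt
  · intro s hs
    rw [(hg s (Ioo_subset_Icc_self hs)).deriv]
    exact mul_nonpos_of_nonneg_of_nonpos (Real.exp_pos _).le
      (by linarith [hdecay s (Ioo_subset_Icc_self hs)])

theorem exp_mul_mul_sub_le_of_hybrid {k ν : ℝ} {t : ℕ → ℝ} {W : ℕ → ℝ → ℝ}
    (ht0 : t 0 = 0) (ht : ∀ i, t i ≤ t (i + 1))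
    (hflow : ∀ i, AntitoneOn (fun s => Real.exp (k * s) * (W i s - ν)) (Icc (t i) (t (i + 1))))
    (hjump : ∀ i, W (i + 1) (t (i + 1)) ≤ W i (t (i + 1))) :
    ∀ j, ∀ s ∈ Icc (t j) (t (j + 1)), Real.exp (k * s) * (W j s - ν) ≤ W 0 0 - ν := by
  intro j
  induction j with
  | zero =>
    intro s hs
    simpa [ht0] using hflow 0 (left_mem_Icc.2 (ht 0)) hs hs.1
  | succ n ih =>
    intro s hs
    calc Real.exp (k * s) * (W (n + 1) s - ν)
        ≤ Real.exp (k * t (n + 1)) * (W (n + 1) (t (n + 1)) - ν) :=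
          hflow (n + 1) (left_mem_Icc.2 (ht (n + 1))) hs hs.1
      _ ≤ Real.exp (k * t (n + 1)) * (W n (t (n + 1)) - ν) := by
          gcongr
          exact hjump n
      _ ≤ W 0 0 - ν := ih _ (right_mem_Icc.2 (ht n))

theorem le_exp_mul_add_of_hybrid {k ν : ℝ} {t : ℕ → ℝ} {W W' : ℕ → ℝ → ℝ}
    (hν : 0 ≤ ν) (ht0 : t 0 = 0) (ht : ∀ i, t i ≤ t (i + 1))
    (hW : ∀ i, ∀ s ∈ Icc (t i) (t (i + 1)), HasDerivAt (W i) (W' i s) s)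
    (hdecay : ∀ i, ∀ s ∈ Icc (t i) (t (i + 1)), W' i s ≤ -k * (W i s - ν))
    (hjump : ∀ i, W (i + 1) (t (i + 1)) ≤ W i (t (i + 1))) :
    ∀ j, ∀ s ∈ Icc (t j) (t (j + 1)), W j s ≤ Real.exp (-k * s) * W 0 0 + ν := by
  intro j s hs
  have h := exp_mul_mul_sub_le_of_hybrid ht0 ht
    (fun i => antitoneOn_exp_mul_mul_sub_of_hasDerivAt (hW i) (hdecay i)) hjump j s hs
  have hinv : Real.exp (-k * s) * Real.exp (k * s) = 1 := by
    rw [← Real.exp_add, neg_mul, neg_add_cancel, Real.exp_zero]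
  calc W j s = Real.exp (-k * s) * (Real.exp (k * s) * (W j s - ν)) + ν := by
        rw [← mul_assoc, hinv, one_mul, sub_add_cancel]
    _ ≤ Real.exp (-k * s) * (W 0 0 - ν) + ν := by gcongr
    _ ≤ Real.exp (-k * s) * W 0 0 + ν := by linarith [mul_nonneg (Real.exp_pos (-k * s)).le hν]

theorem LinearMap.IsSymmetric.hasDerivAt_inner_apply_self {E : Type*} [NormedAddCommGroup E]
    [InnerProductSpace ℝ E] [FiniteDimensional ℝ E] {T : E →ₗ[ℝ] E} (hT : T.IsSymmetric)
    {f : ℝ → E} {f' : E} {s : ℝ} (hf : HasDerivAt f f' s) :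
    HasDerivAt (fun u => ⟪f u, T (f u)⟫) ⟪(2 : ℝ) • T (f s), f'⟫ s := by
  have hTf : HasDerivAt (fun u => T (f u)) (T f') s :=
    (LinearMap.toContinuousLinearMap T).hasFDerivAt.comp_hasDerivAt s hf
  refine (hf.inner ℝ hTf).congr_deriv ?_
  rw [real_inner_smul_left, ← hT, real_inner_comm f']
  ring

theorem pos_and_one_sub_div_sub_div_pos {a γ ᾱ c : ℝ} (hγ : 0 < γ) (ha : a < γ) (hᾱ : 0 < ᾱ)
    (hc : ᾱ * (1 - a / γ)⁻¹ < c) : 0 < c ∧ 0 < 1 - a / γ - ᾱ / c := by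
  have hq : 0 < 1 - a / γ := sub_pos.2 ((div_lt_one hγ).2 ha)
  have hc0 : 0 < c := (by positivity : 0 < ᾱ * (1 - a / γ)⁻¹).trans hc
  refine ⟨hc0, sub_pos.2 ((div_lt_iff₀ hc0).2 ?_)⟩
  exact ((mul_inv_lt_iff₀ hq).1 hc).trans_eq (mul_comm _ _)

theorem eta_coeff_le {γ ᾱ σ σs c₂ c₂s c₁ c₁s d : ℝ} (hγ : 0 < γ) (hᾱ : 0 ≤ ᾱ)
    (hσ : σ ∈ Icc 0 σs) (hc₂ : c₂ ∈ Icc 0 c₂s) (hc₁s : 0 < c₁s) (hc₁ : c₁s ≤ c₁) (hd : 0 ≤ d)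
    (hgain : d * (1 - σs * c₂s / γ - ᾱ / c₁s) = σs) :
    (γ + d * c₂) * (σ * c₁) ≤ (c₁ - ᾱ) * d * γ := by
  obtain ⟨hσ0, hσs⟩ := hσ
  obtain ⟨hc₂0, hc₂s⟩ := hc₂
  have hc₁0 : 0 ≤ c₁ := hc₁s.le.trans hc₁
  have hc₂s0 : 0 ≤ c₂s := hc₂0.trans hc₂s
  have hσs_eq : (γ + d * c₂s) * σs = d * γ * (1 - ᾱ / c₁s) := by
    field_simp at hgain ⊢
    linear_combination (-1 : ℝ) * hgain
  calc (γ + d * c₂) * (σ * c₁) ≤ (γ + d * c₂s) * σs * c₁ := by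
        rw [mul_assoc]; gcongr
    _ = d * γ * (c₁ - ᾱ * (c₁ / c₁s)) := by rw [hσs_eq]; ring
    _ ≤ d * γ * (c₁ - ᾱ) := by
        gcongr
        exact le_mul_of_one_le_right hᾱ ((one_le_div hc₁s).2 hc₁)
    _ = (c₁ - ᾱ) * d * γ := by ring

theorem eps_coeff_le {γ ᾱ ν c₂ c₂s d ε : ℝ} (hγ : 0 < γ) (hc₂ : c₂ ∈ Icc 0 c₂s) (hd : 0 ≤ d)
    (hε : ε ∈ Ioc 0 (ν * ᾱ * γ * (γ + c₂s * d)⁻¹)) :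
    (γ + d * c₂) * ε ≤ ᾱ * ν * γ := by
  obtain ⟨hc₂0, hc₂s⟩ := hc₂
  obtain ⟨hε0, hεs⟩ := hε
  have hγd : 0 < γ + c₂s * d := by nlinarith [hc₂0.trans hc₂s]
  calc (γ + d * c₂) * ε ≤ (γ + c₂s * d) * ε := by
        rw [mul_comm c₂s d]; gcongr
    _ ≤ (γ + c₂s * d) * (ν * ᾱ * γ * (γ + c₂s * d)⁻¹) := by gcongr
    _ = ᾱ * ν * γ := by field_simp

-- Multiplied by `γ`, the triggering rule turns the `|e|²` terms into `η` and `ε` terms, which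
-- `hη` and `hε` control.
theorem iss_deriv_add_mul_le {α γ ᾱ ν σ c₁ c₂ d ε V V' H E : ℝ} (hγ : 0 < γ) (hᾱ : ᾱ ≤ α)
    (hd : 0 ≤ d) (hc₂ : 0 ≤ c₂) (hV : 0 ≤ V) (hH : 0 ≤ H)
    (hiss : V' ≤ -α * V + γ * E) (hflow : γ * E ≤ σ * c₁ * H + ε)
    (hη : (γ + d * c₂) * (σ * c₁) ≤ (c₁ - ᾱ) * d * γ) (hε : (γ + d * c₂) * ε ≤ ᾱ * ν * γ) :
    V' + d * (-c₁ * H + c₂ * E) ≤ -ᾱ * (V + d * H - ν) := by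
  have key : γ * (V' + d * (-c₁ * H + c₂ * E)) ≤ γ * (-ᾱ * (V + d * H - ν)) := by
    nlinarith [mul_le_mul_of_nonneg_left hiss hγ.le, mul_le_mul_of_nonneg_left hflow
      (by positivity : 0 ≤ γ + d * c₂), mul_le_mul_of_nonneg_right hη hH,
      mul_le_mul_of_nonneg_right hᾱ (mul_nonneg hγ.le hV)]
  exact le_of_mul_le_mul_left key hγ

/-- The hybrid arc is modeled by flow intervals `[t i, t (i + 1)]`, the `i`-th one carrying
jump counter `i`. -/
theorem stmt_13_general {nx ny : ℕ}
    (A P : Matrix (Fin nx) (Fin nx) ℝ)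
    (C : Matrix (Fin ny) (Fin nx) ℝ) (L : Matrix (Fin nx) (Fin ny) ℝ)
    (hP : P.PosDef)
    (α γ ᾱ ν σs c₂s c₁s d σ c₂ c₁ c₃ ε : ℝ)
    (hγ : 0 < γ)
    -- ISS Lyapunov inequality for V(ξ) = ⟪ξ, Pξ⟫
    (hISS : ∀ (ξv : EuclideanSpace ℝ (Fin nx)) (ev : EuclideanSpace ℝ (Fin ny)),
      ⟪(2 : ℝ) • (Matrix.toEuclideanLin P ξv),
        Matrix.toEuclideanLin (A - L * C) ξv - Matrix.toEuclideanLin L ev⟫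
        ≤ -α * ⟪ξv, Matrix.toEuclideanLin P ξv⟫ + γ * ‖ev‖ ^ 2)
    (hᾱ : ᾱ ∈ Set.Ioc (0 : ℝ) α) (hν : 0 < ν)
    -- parameter selection (items (i)-(iv) of Theorem 1)
    (hσc : σs * c₂s < γ)
    (hσ : σ ∈ Set.Icc 0 σs) (hc₂ : c₂ ∈ Set.Icc 0 c₂s)
    (hc₁s : c₁s > ᾱ * (1 - σs * c₂s / γ)⁻¹) (hc₁ : c₁ ≥ c₁s)
    (hc₃ : c₃ ∈ Set.Icc (0 : ℝ) 1)
    (hd : d = σs * (1 - σs * c₂s / γ - ᾱ / c₁s)⁻¹)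
    (hε : ε ∈ Set.Ioc 0 (ν * ᾱ * γ * (γ + c₂s * d)⁻¹))
    -- the hybrid solution pair, piecewise on flow intervals
    (t : ℕ → ℝ) (ht0 : t 0 = 0) (htmono : ∀ i, t i ≤ t (i + 1))
    (ξ : ℕ → ℝ → EuclideanSpace ℝ (Fin nx))
    (e : ℕ → ℝ → EuclideanSpace ℝ (Fin ny))
    (η : ℕ → ℝ → ℝ)
    -- flow dynamics and flow set on each interval
    (hflowξ : ∀ i, ∀ s ∈ Set.Icc (t i) (t (i + 1)),
      HasDerivAt (ξ i)
        (Matrix.toEuclideanLin (A - L * C) (ξ i s) - Matrix.toEuclideanLin L (e i s)) s)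
    (hflowη : ∀ i, ∀ s ∈ Set.Icc (t i) (t (i + 1)),
      HasDerivAt (η i) (-c₁ * η i s + c₂ * ‖e i s‖ ^ 2) s)
    (hflowset : ∀ i, ∀ s ∈ Set.Icc (t i) (t (i + 1)),
      γ * ‖e i s‖ ^ 2 ≤ σ * c₁ * η i s + ε ∧ 0 ≤ η i s)
    -- jump set and jump map at each transmission instant
    (hjumpξ : ∀ i, ξ (i + 1) (t (i + 1)) = ξ i (t (i + 1)))
    (hjumpη : ∀ i, η (i + 1) (t (i + 1)) = c₃ * η i (t (i + 1))) :
    ∀ j, ∀ s ∈ Set.Icc (t j) (t (j + 1)),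
      ⟪ξ j s, Matrix.toEuclideanLin P (ξ j s)⟫ + d * η j s ≤
        Real.exp (-ᾱ * s) *
          (⟪ξ 0 0, Matrix.toEuclideanLin P (ξ 0 0)⟫ + d * η 0 0) + ν := by
  obtain ⟨hc₁s0, hgain_pos⟩ := pos_and_one_sub_div_sub_div_pos hγ hσc hᾱ.1 hc₁s
  have hd0 : 0 ≤ d := hd ▸ mul_nonneg (hσ.1.trans hσ.2) (inv_pos.2 hgain_pos).le
  have hgain : d * (1 - σs * c₂s / γ - ᾱ / c₁s) = σs := by
    rw [hd, mul_assoc, inv_mul_cancel₀ hgain_pos.ne', mul_one]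
  have hηcoef := eta_coeff_le hγ hᾱ.1.le hσ hc₂ hc₁s0 hc₁ hd0 hgain
  have hεcoef := eps_coeff_le hγ hc₂ hd0 hε
  have hPpos : (Matrix.toEuclideanLin P).IsPositive :=
    Matrix.isPositive_toEuclideanLin_iff.2 hP.posSemidef
  refine le_exp_mul_add_of_hybrid
    (W := fun i s => ⟪ξ i s, Matrix.toEuclideanLin P (ξ i s)⟫ + d * η i s) hν.le ht0 htmono
    (fun i s hs => (hPpos.isSymmetric.hasDerivAt_inner_apply_self (hflowξ i s hs)).add
      ((hflowη i s hs).const_mul d))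
    (fun i s hs => iss_deriv_add_mul_le hγ hᾱ.2 hd0 hc₂.1 (hPpos.inner_nonneg_right _)
      (hflowset i s hs).2 (hISS _ _) (hflowset i s hs).1 hηcoef hεcoef)
    (fun i => ?_)
  have hη0 := (hflowset i (t (i + 1)) (Set.right_mem_Icc.2 (htmono i))).2
  simp only [hjumpξ, hjumpη]
  gcongr
  exact mul_le_of_le_one_left hη0 hc₃.2

/-- Theorem 1: practical stability bound for the hybrid
event-triggered estimation system. The hybrid arc is modeled by a sequence of
flow intervals [t i, t (i+1)] (the i-th interval carries jump counter i),
with the jump map relating consecutive pieces. -/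
theorem stmt_13 {nx ny nu : ℕ}
    (A P : Matrix (Fin nx) (Fin nx) ℝ)
    (B : Matrix (Fin nx) (Fin nu) ℝ)
    (C : Matrix (Fin ny) (Fin nx) ℝ) (L : Matrix (Fin nx) (Fin ny) ℝ)
    (hP : P.PosDef)
    (α γ ᾱ ν σs c₂s c₁s d σ c₂ c₁ c₃ ε : ℝ)
    (hα : 0 < α) (hγ : 0 < γ)
    -- ISS Lyapunov inequality for V(ξ) = ⟪ξ, Pξ⟫
    (hISS : ∀ (ξv : EuclideanSpace ℝ (Fin nx)) (ev : EuclideanSpace ℝ (Fin ny)),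
      ⟪(2 : ℝ) • (Matrix.toEuclideanLin P ξv),
        Matrix.toEuclideanLin (A - L * C) ξv - Matrix.toEuclideanLin L ev⟫
        ≤ -α * ⟪ξv, Matrix.toEuclideanLin P ξv⟫ + γ * ‖ev‖ ^ 2)
    (hᾱ : ᾱ ∈ Set.Ioc (0 : ℝ) α) (hν : 0 < ν)
    -- parameter selection (items (i)-(iv) of Theorem 1)
    (hσs : 0 < σs) (hc₂s : 0 ≤ c₂s) (hσc : σs * c₂s < γ)
    (hσ : σ ∈ Set.Icc 0 σs) (hc₂ : c₂ ∈ Set.Icc 0 c₂s)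
    (hc₁s : c₁s > ᾱ * (1 - σs * c₂s / γ)⁻¹) (hc₁spos : 0 < c₁s) (hc₁ : c₁ ≥ c₁s)
    (hc₃ : c₃ ∈ Set.Icc (0 : ℝ) 1)
    (hd : d = σs * (1 - σs * c₂s / γ - ᾱ / c₁s)⁻¹)
    (hε : ε ∈ Set.Ioc 0 (ν * ᾱ * γ * (γ + c₂s * d)⁻¹))
    -- the hybrid solution pair, piecewise on flow intervals
    (t : ℕ → ℝ) (ht0 : t 0 = 0) (htmono : ∀ i, t i ≤ t (i + 1))
    (x ξ : ℕ → ℝ → EuclideanSpace ℝ (Fin nx))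
    (e : ℕ → ℝ → EuclideanSpace ℝ (Fin ny))
    (η : ℕ → ℝ → ℝ) (u : ℕ → ℝ → EuclideanSpace ℝ (Fin nu))
    -- flow dynamics and flow set on each interval
    (hflowx : ∀ i, ∀ s ∈ Set.Icc (t i) (t (i + 1)),
      HasDerivAt (x i)
        (Matrix.toEuclideanLin A (x i s) + Matrix.toEuclideanLin B (u i s)) s)
    (hflowξ : ∀ i, ∀ s ∈ Set.Icc (t i) (t (i + 1)),
      HasDerivAt (ξ i)
        (Matrix.toEuclideanLin (A - L * C) (ξ i s) - Matrix.toEuclideanLin L (e i s)) s)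
    (hflowe : ∀ i, ∀ s ∈ Set.Icc (t i) (t (i + 1)),
      HasDerivAt (e i)
        (-(Matrix.toEuclideanLin (C * A) (x i s)) - Matrix.toEuclideanLin (C * B) (u i s)) s)
    (hflowη : ∀ i, ∀ s ∈ Set.Icc (t i) (t (i + 1)),
      HasDerivAt (η i) (-c₁ * η i s + c₂ * ‖e i s‖ ^ 2) s)
    (hflowset : ∀ i, ∀ s ∈ Set.Icc (t i) (t (i + 1)),
      γ * ‖e i s‖ ^ 2 ≤ σ * c₁ * η i s + ε ∧ 0 ≤ η i s)
    -- jump set and jump map at each transmission instant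
    (hjumpset : ∀ i, γ * ‖e i (t (i + 1))‖ ^ 2 ≥ σ * c₁ * η i (t (i + 1)) + ε)
    (hjumpx : ∀ i, x (i + 1) (t (i + 1)) = x i (t (i + 1)))
    (hjumpξ : ∀ i, ξ (i + 1) (t (i + 1)) = ξ i (t (i + 1)))
    (hjumpe : ∀ i, e (i + 1) (t (i + 1)) = 0)
    (hjumpη : ∀ i, η (i + 1) (t (i + 1)) = c₃ * η i (t (i + 1))) :
    ∀ j, ∀ s ∈ Set.Icc (t j) (t (j + 1)),
      ⟪ξ j s, Matrix.toEuclideanLin P (ξ j s)⟫ + d * η j s ≤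
        Real.exp (-ᾱ * s) *
          (⟪ξ 0 0, Matrix.toEuclideanLin P (ξ 0 0)⟫ + d * η 0 0) + ν :=
  stmt_13_general A P C L hP α γ ᾱ ν σs c₂s c₁s d σ c₂ c₁ c₃ ε hγ hISS hᾱ hν hσc hσ hc₂ hc₁s hc₁ hc₃
    hd hε t ht0 htmono ξ e η hflowξ hflowη hflowset hjumpξ hjumpη
end
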